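/- arXiv:1902.03971 — 4 statements merged into one kernel-verified Lean document; each statement's English description precedes it below -/
import Mathlib

section
/- Let β_i = 2^i B_i / i! with B_i the Bernoulli numbers (B_1 = -1/2), and c_i = (1 - 2^{1-i}) β_i. Then for every nonnegative integer k, Σ_{i=0}^k c_i/(k-i)! = (-1)^{k-1} β_k. -/
/-!
In terms of the exponential generating function `b(x) = x/(eˣ - 1)` of the Bernoulli numbers,
`∑ βᵢ xⁱ = b(2x)` and `∑ cᵢ xⁱ = b(2x) - 2 b(x)`, so the left-hand side is the `k`-th coefficient
of `(b(2x) - 2 b(x)) eˣ`. From `(eˣ - 1)(eˣ + 1) = e²ˣ - 1` one gets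
`(b(2x) - 2 b(x)) eˣ = -2x e²ˣ/(e²ˣ - 1) = -b(-2x)`, whose `k`-th coefficient is `(-1)^(k-1) β_k`.
-/

/-- `β_i = 2^i B_i / i!` with `B_i` the Bernoulli numbers (`B_1 = -1/2`). -/
noncomputable def betaCoeff (i : ℕ) : ℚ := 2 ^ i * bernoulli i / (i.factorial : ℚ)

/-- `c_i = (1 - 2^{1-i}) β_i`. -/
noncomputable def cCoeff (i : ℕ) : ℚ := (1 - (2 : ℚ) ^ ((1 : ℤ) - i)) * betaCoeff i

open PowerSeries

namespace PowerSeries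

variable {A : Type*} [CommRing A] [Algebra ℚ A]

theorem rescale_two_exp : rescale (2 : A) (exp A) = exp A * exp A := by
  simpa [one_add_one_eq_two] using (exp_mul_exp_eq_exp_add (1 : A) 1).symm

theorem rescale_neg_exp_mul_rescale_exp (a : A) :
    rescale (-a) (exp A) * rescale a (exp A) = 1 := by
  simp [exp_mul_exp_eq_exp_add]

theorem bernoulliPowerSeries_rescale_mul_rescale_exp_sub_one (a : A) :
    rescale a (bernoulliPowerSeries A) * (rescale a (exp A) - 1) = C a * X := by
  simpa using congrArg (rescale a) (bernoulliPowerSeries_mul_exp_sub_one A)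

theorem rescale_exp_sub_one_ne_zero {a : A} (ha : a ≠ 0) : rescale a (exp A) - 1 ≠ 0 := by
  intro h
  exact ha (by simpa [coeff_exp] using congrArg (coeff 1) h)

theorem rescale_two_bernoulliPowerSeries_sub_mul_exp [IsDomain A] :
    (rescale 2 (bernoulliPowerSeries A) - 2 * bernoulliPowerSeries A) * exp A =
      -rescale (-2) (bernoulliPowerSeries A) := by
  set e := exp A
  have hb := bernoulliPowerSeries_mul_exp_sub_one A
  have h2 := bernoulliPowerSeries_rescale_mul_rescale_exp_sub_one (2 : A)
  have hneg2 := bernoulliPowerSeries_rescale_mul_rescale_exp_sub_one (-2 : A)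
  have hinv := rescale_neg_exp_mul_rescale_exp (2 : A)
  have : CharZero A := algebraRat.charZero A
  have hne := rescale_exp_sub_one_ne_zero (two_ne_zero (α := A))
  rw [rescale_two_exp] at h2 hinv hne
  rw [map_ofNat] at h2
  rw [map_neg, map_ofNat] at hneg2
  apply mul_right_cancel₀ hne
  linear_combination e * h2 - 2 * (e + 1) * e * hb - e * e * hneg2 +
    rescale (-2) (bernoulliPowerSeries A) * hinv

end PowerSeries

theorem coeff_rescale_two_bernoulliPowerSeries_sub (i : ℕ) :
    coeff i (rescale 2 (bernoulliPowerSeries ℚ) - 2 * bernoulliPowerSeries ℚ) = cCoeff i := by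
  have h2 : (2 : ℚ) ^ ((1 : ℤ) - i) = 2 / 2 ^ i := by
    rw [zpow_sub₀ two_ne_zero, zpow_one, zpow_natCast]
  rw [← map_ofNat (C (R := ℚ)) 2]
  simp only [map_sub, coeff_rescale, coeff_C_mul, bernoulliPowerSeries, coeff_mk,
    Algebra.algebraMap_self, RingHom.id_apply, cCoeff, betaCoeff, h2]
  field_simp

theorem coeff_neg_rescale_neg_two_bernoulliPowerSeries (k : ℕ) :
    coeff k (-rescale (-2) (bernoulliPowerSeries ℚ)) = (-1 : ℚ) ^ ((k : ℤ) - 1) * betaCoeff k := by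
  rw [zpow_sub₀ (by norm_num), zpow_one, zpow_natCast]
  simp only [map_neg, coeff_rescale, bernoulliPowerSeries, coeff_mk, Algebra.algebraMap_self,
    RingHom.id_apply, betaCoeff, neg_pow (2 : ℚ)]
  ring

/-- For every nonnegative integer `k`, `∑_{i=0}^k c_i / (k-i)! = (-1)^{k-1} β_k`. -/
theorem stmt4 (k : ℕ) :
    ∑ i ∈ Finset.range (k + 1), cCoeff i / ((k - i).factorial : ℚ)
      = (-1 : ℚ) ^ ((k : ℤ) - 1) * betaCoeff k := by
  rw [← coeff_neg_rescale_neg_two_bernoulliPowerSeries,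
    ← rescale_two_bernoulliPowerSeries_sub_mul_exp, coeff_mul,
    Finset.Nat.sum_antidiagonal_eq_sum_range_succ_mk]
  refine Finset.sum_congr rfl fun i _ => ?_
  rw [coeff_rescale_two_bernoulliPowerSeries_sub, coeff_exp]
  simp [div_eq_mul_inv]
end

section
/- Let β_i = 2^i B_i/i! and c_i = (1 - 2^{1-i}) β_i as above. For every odd integer l > 1, Σ_{i=0}^{l-1} ((l-1-i)/(l-i)!) · c_i = -β_{l-1}. -/
open Nat Finset PowerSeries

lemma PowerSeries.exp_sub_one_ne_zero : exp ℚ - 1 ≠ 0 := fun h ↦ by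
  simpa [coeff_exp] using congrArg (coeff 1) h

lemma exp_mul_rescale_two_bernoulliPowerSeries :
    exp ℚ * rescale 2 (bernoulliPowerSeries ℚ)
      = 2 * bernoulliPowerSeries ℚ - rescale 2 (bernoulliPowerSeries ℚ) := by
  refine mul_right_cancel₀ exp_sub_one_ne_zero ?_
  have hB := bernoulliPowerSeries_mul_exp_sub_one ℚ
  have hB2 : rescale 2 (bernoulliPowerSeries ℚ) * (exp ℚ ^ 2 - 1) = 2 * X := by
    rw [exp_pow_eq_rescale_exp, Nat.cast_ofNat, ← map_one (rescale (2 : ℚ)), ← map_sub,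
      ← map_mul, hB, rescale_X, map_ofNat]
  linear_combination hB2 - 2 * hB

lemma sum_choose_mul_two_pow_mul_bernoulli (n : ℕ) :
    ∑ i ∈ range (n + 1), (n.choose i : ℚ) * 2 ^ i * bernoulli i = (2 - 2 ^ n) * bernoulli n := by
  have h := congrArg (coeff n) exp_mul_rescale_two_bernoulliPowerSeries
  rw [← map_ofNat (C (R := ℚ)) 2, coeff_mul, Nat.sum_antidiagonal_eq_sum_range_succ_mk] at h
  simp only [map_sub, coeff_C_mul, coeff_rescale, bernoulliPowerSeries, coeff_mk, coeff_exp,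
    Algebra.algebraMap_self, RingHom.id_apply] at h
  have hn : (n ! : ℚ) ≠ 0 := by positivity
  calc ∑ i ∈ range (n + 1), (n.choose i : ℚ) * 2 ^ i * bernoulli i
      = n ! * ∑ k ∈ range (n + 1), 1 / k ! * (2 ^ (n - k) * (bernoulli (n - k) / (n - k)!)) := by
        rw [← sum_range_reflect, mul_sum]
        refine sum_congr rfl fun k hk ↦ ?_
        have hk : k ≤ n := mem_range_succ_iff.mp hk
        rw [add_tsub_cancel_right, Nat.choose_symm hk, Nat.cast_choose ℚ hk]
        field_simp
    _ = (2 - 2 ^ n) * bernoulli n := by rw [h]; field_simp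

lemma sum_choose_mul_two_pow_sub_two_mul_bernoulli {n : ℕ} (hn : n ≠ 1) :
    ∑ i ∈ range (n + 1), (n.choose i : ℚ) * ((2 ^ i - 2) * bernoulli i)
      = -2 ^ n * bernoulli n := by
  have hB : ∑ i ∈ range (n + 1), (n.choose i : ℚ) * bernoulli i = bernoulli n := by
    simp [sum_range_succ, hn]
  simp only [mul_sub, sub_mul, sum_sub_distrib, ← mul_assoc, sum_choose_mul_two_pow_mul_bernoulli]
  simp only [mul_right_comm _ (2 : ℚ), ← sum_mul, hB]
  ring

lemma cCoeff_eq (i : ℕ) : cCoeff i = (2 ^ i - 2) * bernoulli i / i ! := by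
  rw [cCoeff, betaCoeff, zpow_sub₀ two_ne_zero, zpow_one, zpow_natCast]
  field_simp

lemma sub_div_factorial_mul_cCoeff {n i : ℕ} (hi : i ≤ n) :
    ((n - i : ℕ) : ℚ) / (n + 1 - i)! * cCoeff i
      = ((n + 1) * (n.choose i * ((2 ^ i - 2) * bernoulli i))
          - (n + 1).choose i * ((2 ^ i - 2) * bernoulli i)) / (n + 1)! := by
  have hchoose : (n.choose i : ℚ) * (n + 1) = (n + 1).choose i * (n + 1 - i : ℕ) := by
    exact_mod_cast Nat.choose_mul_succ_eq n i
  have hfac : ((n + 1)! : ℚ) = (n + 1).choose i * i ! * (n + 1 - i)! := by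
    exact_mod_cast (Nat.choose_mul_factorial_mul_factorial (by omega : i ≤ n + 1)).symm
  have hpos : ((n + 1).choose i : ℚ) ≠ 0 := by
    exact_mod_cast (Nat.choose_pos (by omega : i ≤ n + 1)).ne'
  rw [Nat.cast_sub (by omega : i ≤ n + 1)] at hchoose
  rw [cCoeff_eq, hfac, Nat.cast_sub hi]
  push_cast at hchoose ⊢
  field_simp
  linear_combination (-(2 ^ i - 2) * bernoulli i) * hchoose

/-- For every odd integer `l > 1`, `∑_{i=0}^{l-1} ((l-1-i)/(l-i)!) c_i = -β_{l-1}`. -/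
theorem stmt5 (l : ℕ) (hl : 1 < l) (hodd : Odd l) :
    ∑ i ∈ Finset.range l, ((l - 1 - i : ℕ) : ℚ) / ((l - i).factorial : ℚ) * cCoeff i
      = -betaCoeff (l - 1) := by
  obtain ⟨n, rfl⟩ : ∃ n, l = n + 1 := ⟨l - 1, by omega⟩
  have hn : n ≠ 1 := by rintro rfl; exact Nat.not_odd_iff_even.mpr even_two hodd
  have hsum_succ :
      ∑ i ∈ range (n + 1), ((n + 1).choose i : ℚ) * ((2 ^ i - 2) * bernoulli i) = 0 := by
    have h := sum_choose_mul_two_pow_sub_two_mul_bernoulli (n := n + 1) (by omega)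
    rwa [sum_range_succ, bernoulli_eq_zero_of_odd hodd hl, mul_zero, mul_zero, add_zero,
      mul_zero] at h
  simp only [add_tsub_cancel_right]
  rw [sum_congr rfl fun i hi ↦ sub_div_factorial_mul_cCoeff (mem_range_succ_iff.mp hi),
    ← sum_div, sum_sub_distrib, ← mul_sum, sum_choose_mul_two_pow_sub_two_mul_bernoulli hn,
    hsum_succ, betaCoeff, Nat.factorial_succ]
  push_cast
  field_simp
  ring
end

section
/- Li_3(2) = (7/8)ζ(3) + (π²/4)log 2 − (π/2) i (log 2)², interpreted via the analytic continuation of Li_3 with the branch obtained by approaching 2 from the upper half plane; equivalently, the real identity Li_3(1/2) = (7/8)ζ(3) − (π²/12)log 2 + (1/6)(log 2)³ holds, where Li_3(1/2) = Σ_{k≥1} 2^{-k}/k³. -/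
/-!
Write `Li_s(x) = ∑_{n ≥ 1} xⁿ / nˢ`. On the open unit disc `Li_{s+1}' = Li_s / x` and
`Li_1(x) = -log (1 - x)`, so each identity is proved by checking that a combination of
polylogarithms and logarithms has zero derivative on an interval and evaluating its limit at `1⁻`,
where `Li_s(1) = ζ(s)` and `Li_s(0) = 0`. This gives Euler's reflection formula for `Li₂`, then
Landen's identity `Li₂(1 - 1/x) = -Li₂(1 - x) - log² x / 2`, and with both of them the derivative
of Landen's trilogarithm identity
`Li₃(x) + Li₃(1 - x) + Li₃(1 - 1/x) = ζ(3) + log³ x / 6 + ζ(2) log x - log² x log (1 - x) / 2`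
vanishes. The series only converges for `|x| ≤ 1`, which confines `x` to `(1/2, 1)`; at the
endpoint `x = 1/2`, reached by continuity, `1 - 1/x = -1`, and `Li₃(-1) = -(3/4) ζ(3)` by
splitting into even and odd terms, so the identity becomes the claimed formula for `Li₃(1/2)`.
-/

open Real Set Filter Topology

lemma eqOn_of_hasDerivAt_zero_of_tendsto {f : ℝ → ℝ} {a b c : ℝ}
    (hf : ∀ x ∈ Ioo a b, HasDerivAt f 0 x) (hc : Tendsto f (𝓝[<] b) (𝓝 c)) :
    EqOn f (fun _ => c) (Ioo a b) := by
  intro x hx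
  have hconst : ∀ y ∈ Ioo a b, f y = f x := fun y hy =>
    isOpen_Ioo.is_const_of_deriv_eq_zero isPreconnected_Ioo
      (fun z hz => (hf z hz).differentiableAt.differentiableWithinAt)
      (fun z hz => (hf z hz).deriv) hy hx
  refine tendsto_nhds_unique (tendsto_const_nhds.congr' ?_) hc
  filter_upwards [Ioo_mem_nhdsLT hx.2] with y hy
  exact (hconst y ⟨hx.1.trans hy.1, hy.2⟩).symm

lemma tendsto_log_mul_log_one_sub : Tendsto (fun x => log x * log (1 - x)) (𝓝 1) (𝓝 0) := by
  have hbigO : (fun x => log x * log (1 - x)) =O[𝓝 1] fun x => (x - 1) * log (1 - x) := by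
    simpa using (hasDerivAt_log one_ne_zero).isBigO_sub.mul (Asymptotics.isBigO_refl _ _)
  refine hbigO.trans_tendsto ?_
  have h : Tendsto (fun x : ℝ => (1 - x) * log (1 - x)) (𝓝 1) (𝓝 0) := by
    simpa [Function.comp_def] using (continuous_mul_log.comp (continuous_sub_left 1)).tendsto 1
  rw [← neg_zero]
  exact h.neg.congr fun x => by ring

lemma one_sub_inv_mem_Ioo {x : ℝ} (hx : x ∈ Ioo (1 / 2) 1) : 1 - x⁻¹ ∈ Ioo (-1) 0 := by
  obtain ⟨hx1, hx2⟩ := hx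
  have hx0 : 0 < x := by linarith
  constructor
  · have : x⁻¹ < 2 := by rw [inv_lt_comm₀ hx0 two_pos]; linarith
    linarith
  · linarith [(one_lt_inv₀ hx0).2 hx2]

lemma one_sub_inv_mem_Icc {x : ℝ} (hx : x ∈ Icc (1 / 2) 1) : 1 - x⁻¹ ∈ Icc (-1) 0 := by
  obtain ⟨hx1, hx2⟩ := hx
  have hx0 : 0 < x := by linarith
  constructor
  · have : x⁻¹ ≤ 2 := by rw [inv_le_comm₀ hx0 two_pos]; linarith
    linarith
  · linarith [(one_le_inv₀ hx0).2 hx2]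

noncomputable def polylog (s : ℕ) (x : ℝ) : ℝ := ∑' n : ℕ, x ^ (n + 1) / ((n : ℝ) + 1) ^ s

section Polylog

variable {s : ℕ} {x : ℝ}

lemma summable_one_div_nat_add_one_pow (hs : 2 ≤ s) :
    Summable fun n : ℕ => 1 / ((n : ℝ) + 1) ^ s := by
  exact_mod_cast (summable_nat_add_iff 1).2 (summable_one_div_nat_pow.2 hs)

lemma norm_polylog_term_le (hx : |x| ≤ 1) (n : ℕ) :
    ‖x ^ (n + 1) / ((n : ℝ) + 1) ^ s‖ ≤ 1 / ((n : ℝ) + 1) ^ s := by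
  rw [norm_div, norm_pow, norm_pow, Real.norm_eq_abs, Real.norm_eq_abs,
    abs_of_pos (by positivity : (0 : ℝ) < n + 1)]
  gcongr
  exact pow_le_one₀ (abs_nonneg x) hx

lemma summable_polylog (hs : 2 ≤ s) (hx : |x| ≤ 1) :
    Summable fun n : ℕ => x ^ (n + 1) / ((n : ℝ) + 1) ^ s :=
  .of_norm_bounded (summable_one_div_nat_add_one_pow hs) (norm_polylog_term_le hx)

lemma continuousOn_polylog (hs : 2 ≤ s) : ContinuousOn (polylog s) (Icc (-1) 1) :=
  continuousOn_tsum (fun _ => (continuous_pow _).continuousOn.div_const _)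
    (summable_one_div_nat_add_one_pow hs) fun n _ hx => norm_polylog_term_le (abs_le.2 hx) n

lemma _root_.Filter.Tendsto.polylog {α : Type*} {l : Filter α} {g : α → ℝ} {c : ℝ}
    (hg : Tendsto g l (𝓝 c)) (hs : 2 ≤ s) (hc : c ∈ Icc (-1) 1)
    (hgl : ∀ᶠ a in l, g a ∈ Icc (-1) 1) :
    Tendsto (fun a => polylog s (g a)) l (𝓝 (polylog s c)) :=
  (continuousOn_polylog hs c hc).tendsto.comp (tendsto_nhdsWithin_iff.2 ⟨hg, hgl⟩)

lemma polylog_apply_zero : polylog s 0 = 0 := by simp [polylog]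

lemma polylog_apply_one : polylog s 1 = ∑' n : ℕ, 1 / ((n : ℝ) + 1) ^ s := by
  simp [polylog]

lemma polylog_two_apply_one : polylog 2 1 = π ^ 2 / 6 := by
  have h := (hasSum_nat_add_iff' 1).2 hasSum_zeta_two
  simp only [Finset.range_one, Finset.sum_singleton, Nat.cast_zero, Nat.cast_add, Nat.cast_one,
    ne_eq, OfNat.ofNat_ne_zero, not_false_eq_true, zero_pow, div_zero, sub_zero] at h
  rw [polylog_apply_one, h.tsum_eq]

lemma polylog_one_of_abs_lt_one (hx : |x| < 1) : polylog 1 x = -log (1 - x) := by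
  simpa [polylog] using (hasSum_pow_div_log_of_abs_lt_one hx).tsum_eq

lemma polylog_neg_one (hs : 2 ≤ s) : polylog s (-1) = (2 / 2 ^ s - 1) * polylog s 1 := by
  -- `Li_s(1) + Li_s(-1) = 2 ∑_{m ≥ 1} (2m)⁻ˢ = 2¹⁻ˢ Li_s(1)`
  have hodd : ∀ k : ℕ, (1 + (-1 : ℝ) ^ (2 * k + 1 + 1)) / ((↑(2 * k + 1) : ℝ) + 1) ^ s
      = 2 / 2 ^ s * (1 / ((k : ℝ) + 1) ^ s) := by
    intro k
    rw [pow_succ, pow_succ, pow_mul]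
    push_cast
    rw [show (2 * (k : ℝ) + 1 + 1) = 2 * (k + 1) by ring, mul_pow]
    norm_num
    field_simp
  have hsupp : (Function.support fun n : ℕ => (1 + (-1 : ℝ) ^ (n + 1)) / ((n : ℝ) + 1) ^ s)
      ⊆ range (fun k => 2 * k + 1) := by
    intro n hn
    obtain ⟨k, rfl | rfl⟩ := n.even_or_odd'
    · simp [pow_succ, pow_mul] at hn
    · exact ⟨k, rfl⟩
  have hsum : polylog s 1 + polylog s (-1)
      = ∑' n : ℕ, (1 + (-1 : ℝ) ^ (n + 1)) / ((n : ℝ) + 1) ^ s := by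
    rw [polylog, polylog, ← (summable_polylog hs (by simp)).tsum_add
      (summable_polylog hs (by simp))]
    simp [add_div]
  rw [← (show Function.Injective fun k : ℕ => 2 * k + 1 by intro a b h; simp at h; omega).tsum_eq
    hsupp, tsum_congr hodd, tsum_mul_left, ← polylog_apply_one] at hsum
  linarith

lemma tendsto_polylog_nhdsLT_one (hs : 2 ≤ s) :
    Tendsto (polylog s) (𝓝[<] 1) (𝓝 (polylog s 1)) :=
  (continuousOn_polylog hs 1 ⟨by norm_num, le_rfl⟩).mono_of_mem_nhdsWithin
    (Icc_mem_nhdsLT (by norm_num))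

lemma tendsto_polylog_one_sub_nhdsLT_one (hs : 2 ≤ s) :
    Tendsto (fun z => polylog s (1 - z)) (𝓝[<] 1) (𝓝 0) := by
  rw [← polylog_apply_zero (s := s)]
  refine (((continuous_sub_left 1).tendsto' 1 0 (sub_self 1)).mono_left
    nhdsWithin_le_nhds).polylog hs (by norm_num) ?_
  filter_upwards [Ioo_mem_nhdsLT one_pos] with z hz
  exact ⟨by linarith [hz.2], by linarith [hz.1]⟩

lemma tendsto_polylog_one_sub_inv_nhdsLT_one (hs : 2 ≤ s) :
    Tendsto (fun z => polylog s (1 - z⁻¹)) (𝓝[<] 1) (𝓝 0) := by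
  rw [← polylog_apply_zero (s := s)]
  have hg : Tendsto (fun z : ℝ => 1 - z⁻¹) (𝓝[<] 1) (𝓝 0) := by
    simpa using ((tendsto_const_nhds (x := (1 : ℝ))).sub (tendsto_inv₀ one_ne_zero)).mono_left
      nhdsWithin_le_nhds
  refine hg.polylog hs (by norm_num) ?_
  filter_upwards [Ioo_mem_nhdsLT (by norm_num : (1 / 2 : ℝ) < 1)] with z hz
  exact Ioo_subset_Icc_self ⟨(one_sub_inv_mem_Ioo hz).1, (one_sub_inv_mem_Ioo hz).2.trans one_pos⟩

lemma hasDerivAt_polylog_succ (hx : |x| < 1) (hx0 : x ≠ 0) :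
    HasDerivAt (polylog (s + 1)) (polylog s x / x) x := by
  obtain ⟨r, hxr, hr1⟩ := exists_between hx
  have hr0 : 0 < r := (abs_nonneg x).trans_lt hxr
  have hterm : ∀ (n : ℕ), ∀ y ∈ Ioo (-r) r, HasDerivAt
      (fun z => z ^ (n + 1) / ((n : ℝ) + 1) ^ (s + 1)) (y ^ n / ((n : ℝ) + 1) ^ s) y := by
    intro n y _
    refine ((hasDerivAt_pow (n + 1) y).div_const _).congr_deriv ?_
    rw [Nat.add_sub_cancel]
    push_cast
    field_simp
    ring
  have hbound : ∀ (n : ℕ), ∀ y ∈ Ioo (-r) r, ‖y ^ n / ((n : ℝ) + 1) ^ s‖ ≤ r ^ n := by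
    intro n y hy
    rw [norm_div, norm_pow, norm_pow, Real.norm_eq_abs, Real.norm_eq_abs,
      abs_of_pos (by positivity : (0 : ℝ) < n + 1)]
    calc |y| ^ n / ((n : ℝ) + 1) ^ s ≤ |y| ^ n :=
          div_le_self (by positivity) (one_le_pow₀ (by linarith [n.cast_nonneg (α := ℝ)]))
      _ ≤ r ^ n := pow_le_pow_left₀ (abs_nonneg y) (abs_lt.2 hy).le n
  have h : HasDerivAt (polylog (s + 1)) (∑' n : ℕ, x ^ n / ((n : ℝ) + 1) ^ s) x :=
    hasDerivAt_tsum_of_isPreconnected (summable_geometric_of_lt_one hr0.le hr1)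
      isOpen_Ioo isPreconnected_Ioo hterm hbound (y₀ := 0) ⟨neg_neg_of_pos hr0, hr0⟩
      (by simp) (abs_lt.1 hxr)
  convert h using 1
  rw [polylog, ← tsum_div_const]
  congr 1 with n
  field_simp
  ring

lemma HasDerivAt.polylog_succ {f : ℝ → ℝ} {f' y : ℝ} (hf : HasDerivAt f f' y)
    (hy : |f y| < 1) (hy0 : f y ≠ 0) :
    HasDerivAt (fun z => polylog (s + 1) (f z)) (polylog s (f y) / f y * f') y :=
  (hasDerivAt_polylog_succ hy hy0).comp y hf

lemma HasDerivAt.polylog_two {f : ℝ → ℝ} {f' y : ℝ} (hf : HasDerivAt f f' y)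
    (hy : |f y| < 1) (hy0 : f y ≠ 0) :
    HasDerivAt (fun z => polylog 2 (f z)) (-Real.log (1 - f y) / f y * f') y := by
  simpa [polylog_one_of_abs_lt_one hy] using hf.polylog_succ (s := 1) hy hy0

end Polylog

lemma polylog_two_add_polylog_two_one_sub {x : ℝ} (hx : x ∈ Ioo 0 1) :
    polylog 2 x + polylog 2 (1 - x) = π ^ 2 / 6 - log x * log (1 - x) := by
  have hderiv : ∀ y ∈ Ioo (0 : ℝ) 1,
      HasDerivAt (fun z => polylog 2 z + polylog 2 (1 - z) + log z * log (1 - z)) 0 y := by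
    rintro y ⟨hy0, hy1⟩
    have hy : y ≠ 0 := hy0.ne'
    have hy' : 1 - y ≠ 0 := by linarith
    have hsub := (hasDerivAt_id' y).const_sub 1
    have h := (((hasDerivAt_id' y).polylog_two (abs_lt.2 ⟨by linarith, hy1⟩) hy).add
      (hsub.polylog_two (abs_lt.2 ⟨by linarith, by linarith⟩) hy')).add
      ((hasDerivAt_log hy).mul (hsub.log hy'))
    refine h.congr_deriv ?_
    rw [sub_sub_cancel]
    field_simp
    ring
  have hlim : Tendsto (fun z => polylog 2 z + polylog 2 (1 - z) + log z * log (1 - z))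
      (𝓝[<] 1) (𝓝 (π ^ 2 / 6)) := by
    simpa [polylog_two_apply_one] using ((tendsto_polylog_nhdsLT_one le_rfl).add
      (tendsto_polylog_one_sub_nhdsLT_one le_rfl)).add
      (tendsto_log_mul_log_one_sub.mono_left nhdsWithin_le_nhds)
  have := eqOn_of_hasDerivAt_zero_of_tendsto hderiv hlim hx
  simp only at this
  linarith

lemma polylog_two_one_sub_inv {x : ℝ} (hx : x ∈ Ioo (1 / 2) 1) :
    polylog 2 (1 - x⁻¹) = -polylog 2 (1 - x) - log x ^ 2 / 2 := by
  have hderiv : ∀ y ∈ Ioo (1 / 2 : ℝ) 1,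
      HasDerivAt (fun z => polylog 2 (1 - z⁻¹) + polylog 2 (1 - z) + log z ^ 2 / 2) 0 y := by
    intro y hy
    obtain ⟨hinv1, hinv2⟩ := one_sub_inv_mem_Ioo hy
    obtain ⟨hy1, hy2⟩ := hy
    have hy : y ≠ 0 := by linarith
    have hy' : 1 - y ≠ 0 := by linarith
    have h := ((((hasDerivAt_inv hy).const_sub 1).polylog_two
      (abs_lt.2 ⟨hinv1, by linarith⟩) hinv2.ne).add
      (((hasDerivAt_id' y).const_sub 1).polylog_two (abs_lt.2 ⟨by linarith, by linarith⟩) hy')).add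
      (((hasDerivAt_log hy).pow 2).div_const 2)
    refine h.congr_deriv ?_
    rw [sub_sub_cancel, sub_sub_cancel, log_inv]
    have hy'' : y - 1 ≠ 0 := by linarith
    field_simp
    ring
  have hlim : Tendsto (fun z => polylog 2 (1 - z⁻¹) + polylog 2 (1 - z) + log z ^ 2 / 2)
      (𝓝[<] 1) (𝓝 0) := by
    have hlog := ((continuousAt_log one_ne_zero).tendsto.pow 2).div_const 2
    simpa using ((tendsto_polylog_one_sub_inv_nhdsLT_one le_rfl).add
      (tendsto_polylog_one_sub_nhdsLT_one le_rfl)).add (hlog.mono_left nhdsWithin_le_nhds)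
  have := eqOn_of_hasDerivAt_zero_of_tendsto hderiv hlim hx
  simp only at this
  linarith

lemma polylog_three_landen {x : ℝ} (hx : x ∈ Ioo (1 / 2) 1) :
    polylog 3 x + polylog 3 (1 - x) + polylog 3 (1 - x⁻¹)
      = polylog 3 1 + log x ^ 3 / 6 + π ^ 2 / 6 * log x - log x ^ 2 * log (1 - x) / 2 := by
  have hderiv : ∀ y ∈ Ioo (1 / 2 : ℝ) 1, HasDerivAt (fun z => polylog 3 z + polylog 3 (1 - z)
      + polylog 3 (1 - z⁻¹) - (log z ^ 3 / 6 + π ^ 2 / 6 * log z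
        - log z ^ 2 * log (1 - z) / 2)) 0 y := by
    intro y hy
    have hreflect := polylog_two_add_polylog_two_one_sub ⟨by linarith [hy.1], hy.2⟩
    have hlanden := polylog_two_one_sub_inv hy
    obtain ⟨hinv1, hinv2⟩ := one_sub_inv_mem_Ioo hy
    obtain ⟨hy1, hy2⟩ := hy
    have hy : y ≠ 0 := by linarith
    have hy' : 1 - y ≠ 0 := by linarith
    have hy'' : y - 1 ≠ 0 := by linarith
    have hsub := (hasDerivAt_id' y).const_sub 1
    have hlog := hasDerivAt_log hy
    have h := ((((hasDerivAt_id' y).polylog_succ (s := 2) (abs_lt.2 ⟨by linarith, hy2⟩) hy).add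
      (hsub.polylog_succ (s := 2) (abs_lt.2 ⟨by linarith, by linarith⟩) hy')).add
      (((hasDerivAt_inv hy).const_sub 1).polylog_succ (s := 2)
        (abs_lt.2 ⟨hinv1, by linarith⟩) hinv2.ne)).sub
      (((hlog.pow 3).div_const 6).add (hlog.const_mul (π ^ 2 / 6)) |>.sub
        (((hlog.pow 2).mul (hsub.log hy')).div_const 2))
    refine h.congr_deriv ?_
    rw [Pi.pow_apply, hlanden,
      show polylog 2 (1 - y) = π ^ 2 / 6 - log y * log (1 - y) - polylog 2 y by linarith]
    field_simp
    ring
  have hlim : Tendsto (fun z => polylog 3 z + polylog 3 (1 - z)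
      + polylog 3 (1 - z⁻¹) - (log z ^ 3 / 6 + π ^ 2 / 6 * log z
        - log z ^ 2 * log (1 - z) / 2)) (𝓝[<] 1) (𝓝 (polylog 3 1)) := by
    have hlog : Tendsto log (𝓝 1) (𝓝 0) := by
      simpa using (continuousAt_log one_ne_zero).tendsto
    have hlogs : Tendsto (fun z => log z ^ 3 / 6 + π ^ 2 / 6 * log z
        - log z ^ 2 * log (1 - z) / 2) (𝓝 1) (𝓝 0) := by
      have h := (((hlog.pow 3).div_const 6).add (hlog.const_mul (π ^ 2 / 6))).sub
        ((hlog.mul tendsto_log_mul_log_one_sub).div_const 2)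
      simp only [ne_eq, OfNat.ofNat_ne_zero, not_false_eq_true, zero_pow, zero_div, mul_zero,
        add_zero, sub_zero] at h
      exact h.congr fun z => by ring
    simpa using (((tendsto_polylog_nhdsLT_one (s := 3) (by norm_num)).add
      (tendsto_polylog_one_sub_nhdsLT_one (by norm_num))).add
      (tendsto_polylog_one_sub_inv_nhdsLT_one (by norm_num))).sub
      (hlogs.mono_left nhdsWithin_le_nhds)
  have := eqOn_of_hasDerivAt_zero_of_tendsto hderiv hlim hx
  simp only at this
  linarith

lemma polylog_three_one_half :
    polylog 3 (1 / 2) = 7 / 8 * polylog 3 1 - π ^ 2 / 12 * log 2 + log 2 ^ 3 / 6 := by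
  have hpos : ∀ z ∈ Ico (1 / 2 : ℝ) 1, 0 < z ∧ 0 < 1 - z := fun z hz =>
    ⟨by linarith [hz.1], by linarith [hz.2]⟩
  have hlog : ContinuousOn log (Ico (1 / 2) 1) :=
    continuousOn_log.mono fun z hz => (hpos z hz).1.ne'
  have hlog' : ContinuousOn (fun z => log (1 - z)) (Ico (1 / 2) 1) :=
    (continuousOn_const.sub continuousOn_id).log fun z hz => (hpos z hz).2.ne'
  have hL : ContinuousOn (fun z => polylog 3 z + polylog 3 (1 - z) + polylog 3 (1 - z⁻¹))
      (Ico (1 / 2) 1) := by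
    have hmaps : ∀ z ∈ Ico (1 / 2 : ℝ) 1,
        z ∈ Icc (-1) 1 ∧ 1 - z ∈ Icc (-1) 1 ∧ 1 - z⁻¹ ∈ Icc (-1) 1 := fun z hz =>
      ⟨⟨by linarith [hz.1], hz.2.le⟩, ⟨by linarith [hz.2], by linarith [hz.1]⟩,
        Icc_subset_Icc_right zero_le_one (one_sub_inv_mem_Icc (Ico_subset_Icc_self hz))⟩
    have hP := continuousOn_polylog (s := 3) (by norm_num)
    exact ((hP.comp continuousOn_id fun z hz => (hmaps z hz).1).add
      (hP.comp (continuousOn_const.sub continuousOn_id) fun z hz => (hmaps z hz).2.1)).add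
      (hP.comp (continuousOn_const.sub (continuousOn_inv₀.mono fun z hz => (hpos z hz).1.ne'))
        fun z hz => (hmaps z hz).2.2)
  have hR : ContinuousOn (fun z => polylog 3 1 + log z ^ 3 / 6 + π ^ 2 / 6 * log z
      - log z ^ 2 * log (1 - z) / 2) (Ico (1 / 2) 1) :=
    ((continuousOn_const.add ((hlog.pow 3).div_const 6)).add (continuousOn_const.mul hlog)).sub
      (((hlog.pow 2).mul hlog').div_const 2)
  have h := (Set.EqOn.of_subset_closure (fun z hz => polylog_three_landen hz) hL hR
    Ioo_subset_Ico_self (by rw [closure_Ioo (by norm_num)]; exact Ico_subset_Icc_self))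
    (left_mem_Ico.2 (by norm_num : (1 / 2 : ℝ) < 1))
  norm_num [polylog_neg_one] at h
  rw [one_div, log_inv] at h
  rw [one_div]
  linear_combination h / 2

/-- `Li₃(1/2) = (7/8) ζ(3) - (π²/12) log 2 + (1/6) (log 2)³`, where
`Li₃(1/2) = ∑_{k ≥ 1} 2^{-k}/k³` and `ζ(3) = ∑_{k ≥ 1} 1/k³`. -/
theorem stmt17 :
    (∑' k : ℕ, 1 / (2 ^ (k + 1) * ((k : ℝ) + 1) ^ 3))
      = (7 / 8) * (∑' k : ℕ, 1 / ((k : ℝ) + 1) ^ 3)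
        - (π ^ 2 / 12) * Real.log 2 + (1 / 6) * (Real.log 2) ^ 3 := by
  have h : (∑' k : ℕ, 1 / (2 ^ (k + 1) * ((k : ℝ) + 1) ^ 3)) = polylog 3 (1 / 2) := by
    rw [polylog]
    congr 1 with k
    rw [div_pow, one_pow, div_div]
  rw [h, polylog_three_one_half, polylog_apply_one]
  ring
end

section
/- Let α = Σ_{i=1}^K r_i[(u_i,v_i)] with u_i = Σ_j k_{ji} ã_j, v_i = Σ_j l_{ji} ã_j be a formal sum of symbolic log-pairs, and suppose n > 2. Then Σ_i r_i u_i^{n-2}(u_i dv_i − v_i du_i) = 0 in Ω¹_{n-1}(S̃) if and only if Σ_i r_i u_i^{n-3}(u_i dv_i − v_i du_i) ⊗ u_i = 0 in Ω¹_{n-2}(S̃) ⊗ S̃₁. -/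
open MvPolynomial
open scoped TensorProduct

private lemma stmt19_dterm {N n : ℕ} (hn : 2 < n) (u v : MvPolynomial (Fin N) ℤ) (j : Fin N)
    (kj lj cm dm rr : ℤ) (hju : pderiv j u = C kj) (hjv : pderiv j v = C lj) :
    pderiv j (C rr * (u ^ (n - 2) * (u * C dm - v * C cm)))
      = ((n - 2 : ℕ) : MvPolynomial (Fin N) ℤ) *
          (C rr * (C kj * (u ^ (n - 3) * (u * C dm - v * C cm))))
        + C rr * (u ^ (n - 2) * (C kj * C dm - C lj * C cm)) := by
  simp only [pderiv_C_mul, pderiv_mul, pderiv_pow, map_sub, pderiv_C, hju, hjv, mul_zero,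
    add_zero, zero_mul, show n - 2 - 1 = n - 3 from by omega]
  ring


private noncomputable def stmt19_B (N : ℕ) : (Fin N → MvPolynomial (Fin N) ℤ) →ₗ[ℤ]
    MvPolynomial (Fin N) ℤ →ₗ[ℤ] (Fin N → MvPolynomial (Fin N) ℤ) :=
  LinearMap.mk₂ ℤ (fun x p m => p * x m)
    (fun x y p => by funext m; simp only [Pi.add_apply, mul_add])
    (fun c x p => by funext m; simp only [Pi.smul_apply, zsmul_eq_mul]; ring)
    (fun x p q => by funext m; simp only [Pi.add_apply, add_mul])
    (fun c x p => by funext m; simp only [Pi.smul_apply, zsmul_eq_mul]; ring)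

private lemma stmt19_B_apply {N : ℕ} (x : Fin N → MvPolynomial (Fin N) ℤ)
    (p : MvPolynomial (Fin N) ℤ) (m : Fin N) : stmt19_B N x p m = p * x m := rfl

/-- Let `α = ∑_i r_i [(u_i, v_i)]` with `u_i = ∑_j k_{ji} ã_j`, `v_i = ∑_j l_{ji} ã_j` a
formal sum of symbolic log-pairs, and `n > 2`.  Then
`∑_i r_i u_i^{n-2}(u_i dv_i - v_i du_i) = 0` in `Ω¹_{n-1}(S̃)` if and only if
`∑_i r_i u_i^{n-3}(u_i dv_i - v_i du_i) ⊗ u_i = 0` in `Ω¹_{n-2}(S̃) ⊗ S̃₁`.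
Here a 1-form `∑ f_i dã_i` is encoded by its tuple of coefficients
`(f_i)_i : Fin N → MvPolynomial (Fin N) ℤ`, with `f_i = u^{m}(u ∂ᵢv - v ∂ᵢu)`, and the
tensor product is over `ℤ`. -/
theorem stmt19 (n N K : ℕ) (hn : 2 < n) (r : Fin K → ℤ)
    (km lm : Fin K → Fin N → ℤ)
    (u v : Fin K → MvPolynomial (Fin N) ℤ)
    (hu : ∀ i, u i = ∑ j, MvPolynomial.C (km i j) * MvPolynomial.X j)
    (hv : ∀ i, v i = ∑ j, MvPolynomial.C (lm i j) * MvPolynomial.X j) :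
    ((∑ i, r i • fun j =>
        (u i) ^ (n - 2) * (u i * pderiv j (v i) - v i * pderiv j (u i)))
      = (0 : Fin N → MvPolynomial (Fin N) ℤ))
    ↔
    ((∑ i, r i •
        (((fun j => (u i) ^ (n - 3) * (u i * pderiv j (v i) - v i * pderiv j (u i))) :
            Fin N → MvPolynomial (Fin N) ℤ) ⊗ₜ[ℤ] u i))
      = (0 : (Fin N → MvPolynomial (Fin N) ℤ) ⊗[ℤ] MvPolynomial (Fin N) ℤ)) := by
  have hpu : ∀ i j, pderiv j (u i) = C (km i j) := by
    intro i j
    rw [hu, map_sum]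
    simp [pderiv_C_mul, pderiv_X, Pi.single_apply, mul_ite, Finset.sum_ite_eq']
  have hpv : ∀ i j, pderiv j (v i) = C (lm i j) := by
    intro i j
    rw [hv, map_sum]
    simp [pderiv_C_mul, pderiv_X, Pi.single_apply, mul_ite, Finset.sum_ite_eq']
  have hsmul : ∀ (c : ℤ) (p : MvPolynomial (Fin N) ℤ), c • p = C c * p := by
    intro c p
    rw [eq_intCast (C : ℤ →+* MvPolynomial (Fin N) ℤ) c, zsmul_eq_mul]
  have hpow : ∀ i, u i ^ (n - 2) = u i ^ (n - 3) * u i := by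
    intro i
    rw [← pow_succ]
    congr 1
    omega
  simp only [hpu, hpv]
  constructor
  · -- forward direction
    intro H
    have hH : ∀ m : Fin N,
        ∑ i, C (r i) * (u i ^ (n - 2) * (u i * C (lm i m) - v i * C (km i m))) = 0 := by
      intro m
      have h1 := congrFun H m
      simpa only [Finset.sum_apply, Pi.smul_apply, Pi.zero_apply, hsmul] using h1
    have hD : ∀ j m : Fin N,
        ((n - 2 : ℕ) : MvPolynomial (Fin N) ℤ) *
          (∑ i, C (r i) * (C (km i j) * (u i ^ (n - 3) * (u i * C (lm i m) - v i * C (km i m)))))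
        + (∑ i, C (r i) * (u i ^ (n - 2) *
            (C (km i j) * C (lm i m) - C (lm i j) * C (km i m)))) = 0 := by
      intro j m
      have h0 := congrArg (pderiv j) (hH m)
      rw [map_sum, map_zero] at h0
      rw [← h0, Finset.mul_sum, ← Finset.sum_add_distrib]
      refine Finset.sum_congr rfl fun i _ => ?_
      rw [stmt19_dterm hn (u i) (v i) j (km i j) (lm i j) (km i m) (lm i m) (r i)
        (hpu i j) (hpv i j)]
    have hAnti : ∀ j m : Fin N,
        (∑ i, C (r i) * (u i ^ (n - 2) * (C (km i j) * C (lm i m) - C (lm i j) * C (km i m))))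
        + (∑ i, C (r i) * (u i ^ (n - 2) *
            (C (km i m) * C (lm i j) - C (lm i m) * C (km i j)))) = 0 := by
      intro j m
      rw [← Finset.sum_add_distrib]
      exact Finset.sum_eq_zero fun i _ => by ring
    have hSwap : ∀ j m : Fin N,
        (∑ i, C (r i) * (C (km i j) * (u i ^ (n - 3) * (u i * C (lm i m) - v i * C (km i m)))))
        - (∑ i, C (r i) * (C (km i m) * (u i ^ (n - 3) * (u i * C (lm i j) - v i * C (km i j)))))
        = ∑ i, C (r i) * (u i ^ (n - 2) *
            (C (km i j) * C (lm i m) - C (lm i j) * C (km i m))) := by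
      intro j m
      rw [← Finset.sum_sub_distrib]
      refine Finset.sum_congr rfl fun i _ => ?_
      rw [hpow i]
      ring
    have hcastn2 : ((n - 2 : ℕ) : MvPolynomial (Fin N) ℤ) ≠ 0 :=
      Nat.cast_ne_zero.mpr (by omega)
    have hkey : ∀ j m : Fin N,
        (∑ i, C (r i) * (C (km i j) * (u i ^ (n - 3) *
          (u i * C (lm i m) - v i * C (km i m))))) = 0 := by
      intro j m
      have e1 := hD j m
      have e2 := hD m j
      have e3 := hAnti j m
      have e4 := hSwap j m
      have hsum0 :
          (∑ i, C (r i) * (C (km i j) * (u i ^ (n - 3) * (u i * C (lm i m) - v i * C (km i m)))))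
          + (∑ i, C (r i) * (C (km i m) * (u i ^ (n - 3) * (u i * C (lm i j) - v i * C (km i j)))))
          = 0 := by
        have hc : ((n - 2 : ℕ) : MvPolynomial (Fin N) ℤ) *
            ((∑ i, C (r i) * (C (km i j) * (u i ^ (n - 3) * (u i * C (lm i m) - v i * C (km i m)))))
            + (∑ i, C (r i) * (C (km i m) * (u i ^ (n - 3) * (u i * C (lm i j) - v i * C (km i j))))))
            = 0 := by linear_combination e1 + e2 - e3
        exact (mul_eq_zero.mp hc).resolve_left hcastn2
      have h5 : ((n : ℕ) : MvPolynomial (Fin N) ℤ) *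
          (∑ i, C (r i) * (C (km i j) * (u i ^ (n - 3) * (u i * C (lm i m) - v i * C (km i m)))))
          = 0 := by
        have hcast : ((n : ℕ) : MvPolynomial (Fin N) ℤ)
            = ((n - 2 : ℕ) : MvPolynomial (Fin N) ℤ) + 2 := by
          rw [Nat.cast_sub (by omega : 2 ≤ n)]
          ring
        rw [hcast]
        linear_combination e1 + e4 + hsum0
      exact (mul_eq_zero.mp h5).resolve_left (Nat.cast_ne_zero.mpr (by omega))
    -- now conclude the tensor vanishes
    have step1 : ∀ i : Fin K,
        r i • (((fun m => (u i) ^ (n - 3) * (u i * C (lm i m) - v i * C (km i m))) :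
            Fin N → MvPolynomial (Fin N) ℤ) ⊗ₜ[ℤ] u i)
        = ∑ j, ((r i * km i j) •
            ((fun m => (u i) ^ (n - 3) * (u i * C (lm i m) - v i * C (km i m))) :
              Fin N → MvPolynomial (Fin N) ℤ)) ⊗ₜ[ℤ] X j := by
      intro i
      rw [hu i, TensorProduct.tmul_sum, Finset.smul_sum]
      refine Finset.sum_congr rfl fun j _ => ?_
      rw [← hsmul, TensorProduct.tmul_smul, smul_smul, TensorProduct.smul_tmul']
    calc (∑ i, r i •
          (((fun m => (u i) ^ (n - 3) * (u i * C (lm i m) - v i * C (km i m))) :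
              Fin N → MvPolynomial (Fin N) ℤ) ⊗ₜ[ℤ] u i))
        = ∑ i, ∑ j, ((r i * km i j) •
            ((fun m => (u i) ^ (n - 3) * (u i * C (lm i m) - v i * C (km i m))) :
              Fin N → MvPolynomial (Fin N) ℤ)) ⊗ₜ[ℤ] X j := by
          exact Finset.sum_congr rfl fun i _ => step1 i
      _ = ∑ j, (∑ i, ((r i * km i j) •
            ((fun m => (u i) ^ (n - 3) * (u i * C (lm i m) - v i * C (km i m))) :
              Fin N → MvPolynomial (Fin N) ℤ))) ⊗ₜ[ℤ] X j := by
          rw [Finset.sum_comm]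
          exact Finset.sum_congr rfl fun j _ => (TensorProduct.sum_tmul _ _ _).symm
      _ = 0 := by
          refine Finset.sum_eq_zero fun j _ => ?_
          have hvec : (∑ i, ((r i * km i j) •
              ((fun m => (u i) ^ (n - 3) * (u i * C (lm i m) - v i * C (km i m))) :
                Fin N → MvPolynomial (Fin N) ℤ))) = 0 := by
            funext m
            simpa only [Finset.sum_apply, Pi.smul_apply, Pi.zero_apply, hsmul, map_mul,
              mul_assoc] using hkey j m
          rw [hvec, TensorProduct.zero_tmul]
  · -- backward direction
    intro H
    have h2 := congrArg (TensorProduct.lift (stmt19_B N)) H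
    rw [map_sum, map_zero] at h2
    simp only [map_zsmul, TensorProduct.lift.tmul] at h2
    funext m
    have h3 := congrFun h2 m
    simp only [Finset.sum_apply, Pi.smul_apply, Pi.zero_apply, stmt19_B_apply] at h3
    simp only [Finset.sum_apply, Pi.smul_apply, Pi.zero_apply, hsmul]
    calc ∑ i, C (r i) * (u i ^ (n - 2) * (u i * C (lm i m) - v i * C (km i m)))
        = ∑ i, C (r i) * (u i * (u i ^ (n - 3) * (u i * C (lm i m) - v i * C (km i m)))) := by
          refine Finset.sum_congr rfl fun i _ => ?_
          rw [hpow i]; ring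
      _ = 0 := by
          simpa only [hsmul] using h3
end
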